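/- For every finite graph G and integers d ≥ 1 and k ≥ 0: the d-fold vertex cover number of G is at most k if and only if G admits a k-fat elimination tree of depth at most d, i.e., a rooted tree T of depth at most d together with a partition {V_t : t ∈ V(T)} of V(G) such that |V_t| ≤ k for every node t of T, and whenever an edge of G joins a vertex of V_s to a vertex of V_t, the nodes s and t are equal or in the ancestor–descendant relation in T. -/

import Mathlib

/-- A rooted forest on a vertex type `V`, given by a parent function.
Well-foundedness guarantees that following parents from any vertex
eventually reaches a root (a vertex with no parent). -/
structure RootedForest (V : Type) where
  parent : V → Option V
  wf : WellFounded (fun a b => parent b = some a)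

namespace RootedForest

/-- The depth of a vertex: the number of vertices on the path from its root to it. -/
noncomputable def depth {V : Type} (F : RootedForest V) : V → ℕ :=
  F.wf.fix (fun v ih =>
    match h : F.parent v with
    | none => 1
    | some p => ih p h + 1)

/-- `F.anc u v` means that `u` is an ancestor of `v` in `F` (possibly `u = v`). -/
def anc {V : Type} (F : RootedForest V) (u v : V) : Prop :=
  Relation.ReflTransGen (fun a b => F.parent a = some b) v u

end RootedForest

/-- The depth of a rooted forest: the maximum number of vertices on a root-to-leaf path. -/
noncomputable def forestDepth {V : Type} (F : RootedForest V) : ℕ := ⨆ v, F.depth v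

/-- `F` is an elimination forest of `G`: for every edge of `G`, one endpoint is an
ancestor of the other. -/
def IsElimForest {V : Type} (G : SimpleGraph V) (F : RootedForest V) : Prop :=
  ∀ u v, G.Adj u v → F.anc u v ∨ F.anc v u

/-- The treedepth of a graph: the minimum depth of an elimination forest. -/
noncomputable def treedepth {V : Type} (G : SimpleGraph V) : ℕ :=
  sInf {d : ℕ | ∃ F : RootedForest V, IsElimForest G F ∧ forestDepth F ≤ d}

/-- The `d`-fold vertex cover number of a graph. `vcFold 1 V G = |V(G)|`, and for `d ≥ 2`,
`vcFold d V G` is the least `k` such that there is a vertex set `U` with `|U| ≤ k` all of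
whose removal leaves connected components of `(d-1)`-fold vertex cover number at most `k`. -/
noncomputable def vcFold : (d : ℕ) → (V : Type) → SimpleGraph V → ℕ
  | 0, _, _ => 0
  | 1, V, _ => Nat.card V
  | d + 2, V, G => sInf {k : ℕ | ∃ U : Set V, Nat.card U ≤ k ∧
      ∀ c : (G.induce Uᶜ).ConnectedComponent,
        vcFold (d + 1) c.supp ((G.induce Uᶜ).induce c.supp) ≤ k}
namespace RootedForest
variable {V : Type} (F : RootedForest V)

theorem depth_none {v : V} (h : F.parent v = none) : F.depth v = 1 := by
  rw [depth, WellFounded.fix_eq]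
  split <;> simp_all

theorem depth_some {v p : V} (h : F.parent v = some p) :
    F.depth v = F.depth p + 1 := by
  rw [depth, WellFounded.fix_eq]
  split
  · simp_all
  · rename_i p' hp
    rw [h] at hp
    cases hp
    rfl

theorem one_le_depth (v : V) : 1 ≤ F.depth v := by
  cases h : F.parent v with
  | none => rw [F.depth_none h]
  | some p => rw [F.depth_some h]; omega

theorem anc_refl (v : V) : F.anc v v := Relation.ReflTransGen.refl

theorem anc_trans {u v w : V} (h1 : F.anc u v) (h2 : F.anc v w) : F.anc u w :=
  h2.trans h1

theorem anc_parent {u v : V} (h : F.parent v = some u) : F.anc u v :=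
  Relation.ReflTransGen.single h

theorem eq_of_anc_root {r t : V} (hr : F.parent r = none) (h : F.anc t r) : t = r := by
  rcases h.cases_head with h | ⟨c, hc, _⟩
  · exact h.symm
  · rw [hr] at hc; cases hc
end RootedForest

namespace RootedForest
variable {CC : Type} {Tn : CC → Type}

/-- parent function gluing a family of forests under a fresh root `none`. -/
def glueParent (T : ∀ c, RootedForest (Tn c)) :
    Option (Σ c, Tn c) → Option (Option (Σ c, Tn c))
  | none => none
  | some ⟨c, t⟩ =>
    match (T c).parent t with
    | none => some none
    | some p => some (some ⟨c, p⟩)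

noncomputable def glueWeight (T : ∀ c, RootedForest (Tn c)) :
    Option (Σ c, Tn c) → ℕ
  | none => 0
  | some ⟨c, t⟩ => (T c).depth t

theorem glueParent_lt (T : ∀ c, RootedForest (Tn c))
    {a b : Option (Σ c, Tn c)} (h : glueParent T b = some a) :
    glueWeight T a < glueWeight T b := by
  match b with
  | none => simp [glueParent] at h
  | some ⟨c, t⟩ =>
    rw [glueParent] at h
    split at h
    · rename_i hp
      cases h
      rw [glueWeight, glueWeight]
      exact (T c).one_le_depth t
    · rename_i p hp
      cases h
      rw [glueWeight, glueWeight, (T c).depth_some hp]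
      omega

/-- Gluing a family of rooted forests under a fresh common root. -/
def glue (T : ∀ c, RootedForest (Tn c)) : RootedForest (Option (Σ c, Tn c)) where
  parent := glueParent T
  wf := Subrelation.wf (fun h => glueParent_lt T h)
    (InvImage.wf (glueWeight T) Nat.lt_wfRel.wf)

theorem glue_parent (T : ∀ c, RootedForest (Tn c)) :
    (glue T).parent = glueParent T := rfl

theorem glue_depth_none (T : ∀ c, RootedForest (Tn c)) :
    (glue T).depth none = 1 := (glue T).depth_none rfl

theorem glue_depth_some (T : ∀ c, RootedForest (Tn c)) (c : CC) (t : Tn c) :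
    (glue T).depth (some ⟨c, t⟩) = (T c).depth t + 1 := by
  induction t using (T c).wf.induction with
  | _ t IH =>
    cases hp : (T c).parent t with
    | none =>
      have h1 : (glue T).parent (some ⟨c, t⟩) = some none := by
        rw [glue_parent, glueParent, hp]
      rw [(glue T).depth_some h1, glue_depth_none, (T c).depth_none hp]
    | some p =>
      have h1 : (glue T).parent (some ⟨c, t⟩) = some (some ⟨c, p⟩) := by
        rw [glue_parent, glueParent, hp]
      rw [(glue T).depth_some h1, IH p hp, (T c).depth_some hp]

theorem glue_anc_none (T : ∀ c, RootedForest (Tn c)) (x : Option (Σ c, Tn c)) :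
    (glue T).anc none x := by
  cases x with
  | none => exact (glue T).anc_refl none
  | some y =>
    obtain ⟨c, t⟩ := y
    induction t using (T c).wf.induction with
    | _ t IH =>
      cases hp : (T c).parent t with
      | none =>
        exact (glue T).anc_parent (by rw [glue_parent, glueParent, hp])
      | some p =>
        exact (glue T).anc_trans (IH p hp)
          ((glue T).anc_parent (by rw [glue_parent, glueParent, hp]))

theorem glue_anc_some (T : ∀ c, RootedForest (Tn c)) {c : CC} {u v : Tn c}
    (h : (T c).anc u v) :
    (glue T).anc (some ⟨c, u⟩) (some ⟨c, v⟩) := by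
  induction h with
  | refl => exact (glue T).anc_refl _
  | tail hab hstep IH =>
    exact Relation.ReflTransGen.tail IH (by rw [glue_parent, glueParent, hstep])

theorem glue_root_unique (T : ∀ c, RootedForest (Tn c)) :
    ∃! r, (glue T).parent r = none := by
  refine ⟨none, rfl, fun y hy => ?_⟩
  cases y with
  | none => rfl
  | some z =>
    obtain ⟨c, t⟩ := z
    rw [glue_parent, glueParent] at hy
    split at hy <;> cases hy
end RootedForest


theorem vc_forward : ∀ (n : ℕ) (V : Type) [Finite V] (G : SimpleGraph V) (k : ℕ),
    vcFold (n+1) V G ≤ k →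
    ∃ (Tn : Type) (T : RootedForest Tn) (β : V → Tn),
      Finite Tn ∧ (∃! r : Tn, T.parent r = none) ∧ (∀ t, T.depth t ≤ n+1) ∧
      (∀ t, Nat.card (β ⁻¹' {t}) ≤ k) ∧
      (∀ u v, G.Adj u v → T.anc (β u) (β v) ∨ T.anc (β v) (β u)) := by
  intro n
  induction n with
  | zero =>
    intro V _ G k h
    have hcard : Nat.card V ≤ k := h
    refine ⟨PUnit, ⟨fun _ => none, ⟨fun a => Acc.intro a fun y hy => by cases hy⟩⟩,
      fun _ => PUnit.unit, inferInstance, ⟨PUnit.unit, rfl, fun _ _ => rfl⟩, ?_, ?_, ?_⟩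
    · intro t
      rw [RootedForest.depth_none _ rfl]
    · intro t
      exact le_trans (Nat.card_le_card_of_injective Subtype.val Subtype.val_injective) hcard
    · intro u v _
      exact Or.inl (Relation.ReflTransGen.refl)
  | succ m IH =>
    intro V _ G k h
    classical
    have hSdef : vcFold (m+1+1) V G = sInf {k' : ℕ | ∃ U : Set V, Nat.card U ≤ k' ∧
      ∀ c : (G.induce Uᶜ).ConnectedComponent,
        vcFold (m+1) c.supp ((G.induce Uᶜ).induce c.supp) ≤ k'} := rfl
    rw [hSdef] at h
    have hne : Set.Nonempty {k' : ℕ | ∃ U : Set V, Nat.card U ≤ k' ∧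
      ∀ c : (G.induce Uᶜ).ConnectedComponent,
        vcFold (m+1) c.supp ((G.induce Uᶜ).induce c.supp) ≤ k'} := by
      refine ⟨Nat.card (Set.univ : Set V), Set.univ, le_rfl, fun c => ?_⟩
      obtain ⟨v, -⟩ := c.exists_rep
      exact absurd v.2 (by simp)
    obtain ⟨U, hU1, hU2⟩ := Nat.sInf_mem hne
    have hUk : Nat.card U ≤ k := le_trans hU1 h
    have hck : ∀ c : (G.induce Uᶜ).ConnectedComponent,
        vcFold (m+1) c.supp ((G.induce Uᶜ).induce c.supp) ≤ k :=
      fun c => le_trans (hU2 c) h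
    choose Tn T β hfin hroot hdepth hbag hedge using
      fun c : (G.induce Uᶜ).ConnectedComponent => IH _ ((G.induce Uᶜ).induce c.supp) k (hck c)
    have hfinCC : Finite (G.induce Uᶜ).ConnectedComponent :=
      Finite.of_surjective (G.induce Uᶜ).connectedComponentMk
        (fun c => c.exists_rep)
    haveI := hfinCC
    haveI := hfin
    haveI : Finite (Σ c : (G.induce Uᶜ).ConnectedComponent, Tn c) := Finite.instSigma
    haveI : Finite (Option (Σ c : (G.induce Uᶜ).ConnectedComponent, Tn c)) :=
      Finite.of_equiv _ (Equiv.optionEquivSumPUnit.{0,0} _).symm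
    let cmp : ↥Uᶜ → (G.induce Uᶜ).ConnectedComponent := (G.induce Uᶜ).connectedComponentMk
    let β' : V → Option (Σ c, Tn c) := fun v =>
      if hv : v ∈ U then none
      else some ⟨cmp ⟨v, hv⟩, β (cmp ⟨v, hv⟩) ⟨⟨v, hv⟩, rfl⟩⟩
    have hβU : ∀ (v : V) (hv : v ∉ U),
        β' v = some ⟨cmp ⟨v, hv⟩, β (cmp ⟨v, hv⟩) ⟨⟨v, hv⟩, rfl⟩⟩ := fun v hv => dif_neg hv
    have hβU' : ∀ (v : V), v ∈ U → β' v = none := fun v hv => dif_pos hv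
    have hspec : ∀ (c : (G.induce Uᶜ).ConnectedComponent) (e : ↥c.supp),
        β' ((e : ↥Uᶜ) : V) = some ⟨c, β c e⟩ := by
      rintro c ⟨⟨v, hv⟩, he⟩
      have hvU : v ∉ U := hv
      have hc := (SimpleGraph.ConnectedComponent.mem_supp_iff _ _).mp he
      subst hc
      rw [hβU v hvU]
    refine ⟨Option (Σ c, Tn c), RootedForest.glue T, β', inferInstance,
      RootedForest.glue_root_unique T, ?_, ?_, ?_⟩
    · intro t
      match t with
      | none => rw [RootedForest.glue_depth_none]; omega
      | some ⟨c, t⟩ =>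
        rw [RootedForest.glue_depth_some]
        exact Nat.succ_le_succ (hdepth c t)
    · intro t
      match t with
      | none =>
        have hpre : β' ⁻¹' {none} = U := by
          ext v
          simp only [Set.mem_preimage, Set.mem_singleton_iff]
          constructor
          · intro hv
            by_contra hvU
            rw [hβU v hvU] at hv
            cases hv
          · exact hβU' v
        rw [hpre]
        exact hUk
      | some ⟨c, t⟩ =>
        have exf : ∀ x : ↥(β' ⁻¹' {some ⟨c, t⟩}), ∃ y : ↥(β c ⁻¹' {t}),
            (((y : ↥c.supp) : ↥Uᶜ) : V) = (x : V) := by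
          rintro ⟨v, hv⟩
          have hvmem : β' v = some ⟨c, t⟩ := hv
          have hvU : v ∉ U := by
            intro hvU
            rw [hβU' v hvU] at hvmem
            cases hvmem
          rw [hβU v hvU] at hvmem
          have h2 := Option.some.inj hvmem
          rw [Sigma.mk.inj_iff] at h2
          obtain ⟨hc, ht⟩ := h2
          subst hc
          have ht' := eq_of_heq ht
          exact ⟨⟨⟨⟨v, hvU⟩, rfl⟩, ht'⟩, rfl⟩
        choose f hf using exf
        have hinj : Function.Injective f := fun a b hab =>
          Subtype.ext (by rw [← hf a, ← hf b, hab])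
        exact le_trans (Nat.card_le_card_of_injective f hinj) (hbag c t)
    · intro u v huv
      by_cases hu : u ∈ U
      · rw [hβU' u hu]
        exact Or.inl (RootedForest.glue_anc_none T _)
      by_cases hv : v ∈ U
      · rw [hβU' v hv]
        exact Or.inr (RootedForest.glue_anc_none T _)
      have hadj : (G.induce Uᶜ).Adj ⟨u, hu⟩ ⟨v, hv⟩ := by
        simp only [SimpleGraph.comap_adj]
        exact huv
      have hc : cmp ⟨v, hv⟩ = cmp ⟨u, hu⟩ :=
        (SimpleGraph.ConnectedComponent.sound hadj.reachable).symm
      have hadj2 : ((G.induce Uᶜ).induce ((cmp ⟨u, hu⟩).supp)).Adj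
          ⟨⟨u, hu⟩, rfl⟩ ⟨⟨v, hv⟩, hc⟩ := by
        simp only [SimpleGraph.comap_adj]
        exact hadj
      rcases hedge _ ⟨⟨u, hu⟩, rfl⟩ ⟨⟨v, hv⟩, hc⟩ hadj2 with hcase | hcase
      · left
        rw [show β' u = some ⟨cmp ⟨u, hu⟩, β _ ⟨⟨u, hu⟩, rfl⟩⟩ from hspec _ ⟨⟨u, hu⟩, rfl⟩,
           show β' v = some ⟨cmp ⟨u, hu⟩, β _ ⟨⟨v, hv⟩, hc⟩⟩ from hspec _ ⟨⟨v, hv⟩, hc⟩]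
        exact RootedForest.glue_anc_some T hcase
      · right
        rw [show β' u = some ⟨cmp ⟨u, hu⟩, β _ ⟨⟨u, hu⟩, rfl⟩⟩ from hspec _ ⟨⟨u, hu⟩, rfl⟩,
           show β' v = some ⟨cmp ⟨u, hu⟩, β _ ⟨⟨v, hv⟩, hc⟩⟩ from hspec _ ⟨⟨v, hv⟩, hc⟩]
        exact RootedForest.glue_anc_some T hcase

namespace RootedForest
variable {V : Type} (F : RootedForest V)

/-- The "acyclicity" consequence of well-foundedness: no vertex is a strict
ancestor of itself. -/
theorem no_cycle {s c : V} (hp : F.parent s = some c) (h : F.anc s c) : False := by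
  have h1 : Relation.ReflTransGen (fun a b => F.parent b = some a) s c :=
    Relation.reflTransGen_swap.mpr h
  have h2 : Relation.TransGen (fun a b => F.parent b = some a) s s :=
    Relation.TransGen.tail' h1 hp
  exact (F.wf.transGen).isIrrefl.irrefl s h2

/-- The ancestor of `t` at depth 2 (or `t` itself if `t` is a root). -/
noncomputable def anchor : V → V := F.wf.fix fun t ih =>
  match h : F.parent t with
  | none => t
  | some p =>
    match F.parent p with
    | none => t
    | some _ => ih p h

theorem anchor_none {t : V} (h : F.parent t = none) : F.anchor t = t := by
  rw [anchor, WellFounded.fix_eq]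
  split <;> simp_all

theorem anchor_some_none {t p : V} (h : F.parent t = some p) (hp : F.parent p = none) :
    F.anchor t = t := by
  rw [anchor, WellFounded.fix_eq]
  split
  · rfl
  · rename_i p' hp'
    rw [h] at hp'
    cases hp'
    split
    · rfl
    · rename_i q hq
      rw [hp] at hq
      cases hq

theorem anchor_some_some {t p q : V} (h : F.parent t = some p) (hp : F.parent p = some q) :
    F.anchor t = F.anchor p := by
  rw [anchor, WellFounded.fix_eq]
  split
  · rename_i hn
    rw [h] at hn
    cases hn
  · rename_i p' hp'
    rw [h] at hp'
    cases hp'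
    split
    · rename_i hn
      rw [hp] at hn
      cases hn
    · rfl

theorem anc_anchor (t : V) : F.anc (F.anchor t) t := by
  induction t using F.wf.induction with
  | _ t IH =>
    cases h : F.parent t with
    | none => rw [F.anchor_none h]; exact F.anc_refl t
    | some p =>
      cases hp : F.parent p with
      | none => rw [F.anchor_some_none h hp]; exact F.anc_refl t
      | some q =>
        rw [F.anchor_some_some h hp]
        exact F.anc_trans (IH p h) (F.anc_parent h)

theorem parent_anchor {t : V} : ∀ {p : V}, F.parent t = some p →
    ∃ r0, F.parent (F.anchor t) = some r0 ∧ F.parent r0 = none := by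
  induction t using F.wf.induction with
  | _ t IH =>
    intro p h
    cases hp : F.parent p with
    | none => exact ⟨p, by rw [F.anchor_some_none h hp]; exact h, hp⟩
    | some q =>
      rw [F.anchor_some_some h hp]
      exact IH p h hp

theorem eq_of_anc_of_parent_none {r t : V} (hr : F.parent r = none) (h : F.anc t r) :
    t = r := F.eq_of_anc_root hr h

theorem anchor_eq_of_anc {s t : V} (h : F.anc s t) (hs : F.parent s ≠ none) :
    F.anchor t = F.anchor s := by
  induction h using Relation.ReflTransGen.head_induction_on with
  | refl => rfl
  | head h' hrest IH =>
    rename_i a c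
    cases hq : F.parent c with
    | none =>
      exact absurd (F.eq_of_anc_root hq hrest).symm (fun hh => hs (hh ▸ hq))
    | some q =>
      rw [F.anchor_some_some h' hq]
      exact IH

section Sub
variable (s : V)

open Classical in
/-- Parent function of the subforest on the descendants of `s`, making `s` a root. -/
noncomputable def subParent (x : {t // F.anc s t}) : Option {t // F.anc s t} :=
  if x.1 = s then none
  else match h : F.parent x.1 with
    | none => none
    | some p => if hp : F.anc s p then some ⟨p, hp⟩ else none

theorem subParent_some {x y : {t // F.anc s t}} (h : subParent F s x = some y) :
    F.parent x.1 = some y.1 := by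
  rw [subParent] at h
  split at h
  · cases h
  · split at h
    · cases h
    · rename_i p hp
      split at h
      · cases h
        exact hp
      · cases h

theorem subParent_self (h : F.anc s s) : subParent F s ⟨s, h⟩ = none := by
  rw [subParent]
  simp

theorem subParent_eq_some (x : {t // F.anc s t}) (hx : x.1 ≠ s) {p : V}
    (hp : F.parent x.1 = some p) (hps : F.anc s p) :
    subParent F s x = some ⟨p, hps⟩ := by
  rw [subParent, if_neg hx]
  split
  · rename_i hn
    rw [hp] at hn
    cases hn
  · rename_i p' hp'
    rw [hp] at hp'
    cases hp'
    rw [dif_pos hps]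

theorem subParent_eq_none {x : {t // F.anc s t}} (h : subParent F s x = none) :
    x.1 = s ∨ F.parent x.1 = none ∨ ∃ p, F.parent x.1 = some p ∧ ¬ F.anc s p := by
  rw [subParent] at h
  split at h
  · rename_i hx
    exact Or.inl hx
  · split at h
    · rename_i hn
      exact Or.inr (Or.inl hn)
    · rename_i p hp
      split at h
      · cases h
      · rename_i hnp
        exact Or.inr (Or.inr ⟨p, hp, hnp⟩)

/-- The subforest of the descendants of `s`. -/
noncomputable def subForest : RootedForest {t // F.anc s t} where
  parent := subParent F s
  wf := Subrelation.wf (fun {a b} h => subParent_some F s h)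
    (InvImage.wf Subtype.val F.wf)

theorem subForest_parent : (subForest F s).parent = subParent F s := rfl

theorem subForest_root_unique (h1 : ∀ t, F.anc s t → F.parent t ≠ none) :
    ∃! x : {t // F.anc s t}, (subForest F s).parent x = none := by
  refine ⟨⟨s, F.anc_refl s⟩, subParent_self F s _, ?_⟩
  rintro ⟨y, hy⟩ hpy
  rw [subForest_parent] at hpy
  rcases subParent_eq_none F s hpy with h | h | ⟨p, hp, hnp⟩
  · exact Subtype.ext h
  · exact absurd h (h1 y hy)
  · rcases hy.cases_head with h | ⟨c, hc, hcs⟩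
    · exact Subtype.ext h
    · rw [hp] at hc
      cases hc
      exact absurd hcs hnp

theorem subForest_depth (h1 : ∀ t, F.anc s t → F.parent t ≠ none)
    (x : {t // F.anc s t}) : (subForest F s).depth x + 1 ≤ F.depth x.1 := by
  induction x using (subForest F s).wf.induction with
  | _ x IH =>
    cases hp : (subForest F s).parent x with
    | none =>
      rw [(subForest F s).depth_none hp]
      rw [subForest_parent] at hp
      have h2 : ∃ p, F.parent x.1 = some p := by
        rcases subParent_eq_none F s hp with h | h | ⟨p, hpp, -⟩
        · cases h3 : F.parent x.1 with
          | none => exact absurd h3 (h1 x.1 x.2)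
          | some p => exact ⟨p, rfl⟩
        · exact absurd h (h1 x.1 x.2)
        · exact ⟨p, hpp⟩
      obtain ⟨p, hpp⟩ := h2
      rw [F.depth_some hpp]
      have := F.one_le_depth p
      omega
    | some y =>
      rw [(subForest F s).depth_some hp]
      rw [subForest_parent] at hp
      rw [F.depth_some (subParent_some F s hp)]
      have := IH y hp
      omega

theorem subForest_anc (h1 : ∀ t, F.anc s t → F.parent t ≠ none)
    {t1 t2 : V} (h1s : F.anc s t1) (h2s : F.anc s t2) (h : F.anc t1 t2) :
    (subForest F s).anc ⟨t1, h1s⟩ ⟨t2, h2s⟩ := by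
  rw [anc] at h
  induction h using Relation.ReflTransGen.head_induction_on with
  | refl => exact (subForest F s).anc_refl _
  | head h' hrest IH =>
    rename_i a c
    have hc : F.anc s c := Relation.ReflTransGen.trans hrest h1s
    have hane : a ≠ s := by
      rintro rfl
      exact F.no_cycle h' hc
    exact Relation.ReflTransGen.head
      (subParent_eq_some F s ⟨a, h2s⟩ hane h' hc) (IH hc)
end Sub
end RootedForest

theorem vc_backward : ∀ (n : ℕ) (V : Type) [Finite V] (G : SimpleGraph V) (k : ℕ)
    (Tn : Type) (T : RootedForest Tn) (β : V → Tn),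
    (∃! r : Tn, T.parent r = none) → (∀ t, T.depth t ≤ n+1) →
    (∀ t, Nat.card (β ⁻¹' {t}) ≤ k) →
    (∀ u v, G.Adj u v → T.anc (β u) (β v) ∨ T.anc (β v) (β u)) →
    vcFold (n+1) V G ≤ k := by
  intro n
  induction n with
  | zero =>
    intro V _ G k Tn T β hroot hdepth hbag hedge
    obtain ⟨r, hr, hru⟩ := hroot
    have hall : ∀ t : Tn, t = r := by
      intro t
      refine hru t ?_
      cases h : T.parent t with
      | none => exact h
      | some p =>
        have h2 := hdepth t
        rw [T.depth_some h] at h2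
        have := T.one_le_depth p
        omega
    have hmem : ∀ v : V, v ∈ β ⁻¹' {r} := fun v => hall (β v)
    have hinj : Function.Injective (fun v : V => (⟨v, hmem v⟩ : ↥(β ⁻¹' {r}))) :=
      fun a b hab => congrArg Subtype.val hab
    exact le_trans (Nat.card_le_card_of_injective _ hinj) (hbag r)
  | succ m IH =>
    intro V _ G k Tn T β hroot hdepth hbag hedge
    classical
    obtain ⟨r, hr, hru⟩ := hroot
    have hSdef : vcFold (m+1+1) V G = sInf {k' : ℕ | ∃ U : Set V, Nat.card U ≤ k' ∧
      ∀ c : (G.induce Uᶜ).ConnectedComponent,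
        vcFold (m+1) c.supp ((G.induce Uᶜ).induce c.supp) ≤ k'} := rfl
    rw [hSdef]
    set U : Set V := β ⁻¹' {r} with hU
    refine Nat.sInf_le ⟨U, hbag r, ?_⟩
    intro c
    -- every vertex outside U has a non-root bag
    have hnr : ∀ w : ↥Uᶜ, β w.1 ≠ r := fun w hw => w.2 hw
    have hnp : ∀ w : ↥Uᶜ, T.parent (β w.1) ≠ none :=
      fun w hw => hnr w (hru _ hw)
    obtain ⟨v0, hv0⟩ := c.exists_rep
    set s : Tn := T.anchor (β v0.1) with hs
    -- parent of s is r
    have hps : T.parent s = some r := by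
      cases hp0 : T.parent (β v0.1) with
      | none => exact absurd hp0 (hnp v0)
      | some p =>
        obtain ⟨r0, h1, h2⟩ := T.parent_anchor hp0
        rw [hru r0 h2] at h1
        exact h1
    have h1 : ∀ t', T.anc s t' → T.parent t' ≠ none := by
      intro t' ht' hn'
      have e1 : t' = r := hru t' hn'
      rw [e1] at ht'
      have e2 : s = r := T.eq_of_anc_root hr ht'
      rw [e2, hr] at hps
      cases hps
    -- bags of vertices in the same component share the anchor s
    have hstep : ∀ a b : ↥Uᶜ, (G.induce Uᶜ).Adj a b →
        T.anchor (β a.1) = T.anchor (β b.1) := by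
      intro a b hab
      have hab' : G.Adj a.1 b.1 := hab
      rcases hedge _ _ hab' with h | h
      · rw [T.anchor_eq_of_anc h (hnp a)]
      · rw [T.anchor_eq_of_anc h (hnp b)]
    have hwalk : ∀ (a w : ↥Uᶜ) (p : (G.induce Uᶜ).Walk a w),
        T.anchor (β a.1) = T.anchor (β w.1) := by
      intro a w p
      induction p with
      | nil => rfl
      | cons h p IH2 => exact (hstep _ _ h).trans IH2
    have hsupp : ∀ e : ↥c.supp, T.anchor (β e.1.1) = s := by
      intro e
      have he : (G.induce Uᶜ).connectedComponentMk e.1 = c :=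
        (SimpleGraph.ConnectedComponent.mem_supp_iff _ _).mp e.2
      have hreach : (G.induce Uᶜ).Reachable v0 e.1 :=
        SimpleGraph.ConnectedComponent.exact (hv0.trans he.symm)
      obtain ⟨p⟩ := hreach
      exact (hwalk _ _ p).symm
    -- the elimination tree for the component
    have hancs : ∀ e : ↥c.supp, T.anc s (β e.1.1) := fun e =>
      hsupp e ▸ T.anc_anchor (β e.1.1)
    refine IH _ ((G.induce Uᶜ).induce c.supp) k {t // T.anc s t}
      (T.subForest s) (fun e => ⟨β e.1.1, hancs e⟩)
      (T.subForest_root_unique s h1) ?_ ?_ ?_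
    · intro x
      have h2 := T.subForest_depth s h1 x
      have h3 := hdepth x.1
      omega
    · rintro ⟨t, ht⟩
      have exf : ∀ x : ↥((fun e : ↥c.supp => (⟨β e.1.1, hancs e⟩ : {t // T.anc s t})) ⁻¹'
          {⟨t, ht⟩}), ∃ y : ↥(β ⁻¹' {t}), (y : V) = ((x : ↥c.supp) : ↥Uᶜ) := by
        rintro ⟨e, he⟩
        have h2 : β e.1.1 = t := congrArg Subtype.val he
        exact ⟨⟨e.1.1, h2⟩, rfl⟩
      choose f hf using exf
      have hinj : Function.Injective f := by
        intro a b hab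
        have h2 : ((a : ↥c.supp) : ↥Uᶜ).1 = ((b : ↥c.supp) : ↥Uᶜ).1 := by
          rw [← hf a, ← hf b, hab]
        exact Subtype.ext (Subtype.ext (Subtype.ext h2))
      exact le_trans (Nat.card_le_card_of_injective f hinj) (hbag t)
    · intro x y hxy
      have hxy' : G.Adj x.1.1 y.1.1 := hxy
      rcases hedge _ _ hxy' with h | h
      · exact Or.inl (T.subForest_anc s h1 (hancs x) (hancs y) h)
      · exact Or.inr (T.subForest_anc s h1 (hancs y) (hancs x) h)

/-- for a finite graph `G`, `d ≥ 1` and `k ≥ 0`, the `d`-fold vertex cover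
number of `G` is at most `k` if and only if `G` admits a `k`-fat elimination tree of depth
at most `d`: a rooted tree `T` of depth at most `d` (with exactly one root) together with
a partition of `V(G)` into bags `β ⁻¹' {t}` of size at most `k`, such that every edge of
`G` joins vertices whose bags are equal or in the ancestor-descendant relation in `T`. -/
theorem stmt4 {V : Type} [Fintype V] (G : SimpleGraph V) (d k : ℕ) (hd : 1 ≤ d) :
    vcFold d V G ≤ k ↔
      ∃ (Tn : Type) (T : RootedForest Tn) (β : V → Tn),
        Finite Tn ∧
        (∃! r : Tn, T.parent r = none) ∧
        (∀ t : Tn, T.depth t ≤ d) ∧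
        (∀ t : Tn, Nat.card (β ⁻¹' {t}) ≤ k) ∧
        (∀ u v : V, G.Adj u v → T.anc (β u) (β v) ∨ T.anc (β v) (β u)) := by
  obtain ⟨n, rfl⟩ : ∃ n, d = n + 1 := ⟨d - 1, by omega⟩
  constructor
  · intro h
    exact vc_forward n V G k h
  · rintro ⟨Tn, T, β, hfin, hroot, hdepth, hbag, hedge⟩
    exact vc_backward n V G k Tn T β hroot hdepth hbag hedge
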